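/- Let R be a supertropical semiring such that eR is a semifield (i.e. every element of eR \ {0} is invertible in eR with identity e). If a, b, c, d ∈ R satisfy e·b·c = e·a·d, then a·c + b·d = (a+b)·(c+d). -/

import Mathlib

open scoped Classical

namespace Supertrop

section Defs

variable (R : Type*) [CommSemiring R]

/-- The distinguished element `e = 1 + 1` of a semiring. -/
def eps : R := 1 + 1

/-- `R` is a supertropical semiring: `e` is additively idempotent, and the two
supertropical addition axioms hold. -/
def IsSupertropical : Prop :=
  eps R + eps R = eps R ∧
    (∀ x y : R, eps R * x ≠ eps R * y → x + y = x ∨ x + y = y) ∧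
    (∀ x y : R, eps R * x = eps R * y → x + y = eps R * y)

/-- The ghost ideal `eR`, as a subset of `R`. -/
def eSet : Set R := Set.range (fun a : R => eps R * a)

/-- The tangible elements `𝒯(R) = R \ eR`. -/
def tangible : Set R := {x : R | x ∉ eSet R}

/-- The nonzero ghost elements `𝒢(R) = eR \ {0}`. -/
def ghost : Set R := eSet R \ {0}

end Defs

section Orders

variable {R : Type*} [CommSemiring R]

/-- The minimal ordering on an additive monoid: `x ≤ y` iff `∃ z, x + z = y`. -/
def mle {M : Type*} [AddCommMonoid M] (x y : M) : Prop := ∃ z, x + z = y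

/-- Strict minimal ordering. -/
def mlt {M : Type*} [AddCommMonoid M] (x y : M) : Prop := mle x y ∧ x ≠ y

/-- The (total) ordering of the bipotent semiring `eR`: `u ≤ v ⟺ u + v = v`. -/
def gle (u v : R) : Prop := u + v = v

/-- The strict ordering of `eR`. -/
def glt (u v : R) : Prop := gle u v ∧ u ≠ v

end Orders

section SSF

variable (R : Type*) [CommSemiring R]

/-- `R` is a supersemifield: supertropical, every tangible element is invertible in `R`,
and `𝒢(R)` is a group under multiplication with identity `e`. -/
def IsSupersemifield : Prop :=
  IsSupertropical R ∧
    (∀ t ∈ tangible R, IsUnit t) ∧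
    eps R ∈ ghost R ∧
    (∀ g ∈ ghost R, ∀ h ∈ ghost R, g * h ∈ ghost R) ∧
    (∀ g ∈ ghost R, ∃ h ∈ ghost R, g * h = eps R)

/-- The supersemifield `R` is tangible: `e·𝒯(R) = 𝒢(R)`. -/
def TangibleSSF : Prop := (fun t => eps R * t) '' tangible R = ghost R

/-- Nontriviality: `𝒢(R) ≠ {e}`. -/
def NontrivialG : Prop := ghost R ≠ {eps R}

/-- `R` is discrete: `𝒢(R)` has a smallest element `> e`. -/
def DiscreteR : Prop :=
  ∃ c ∈ ghost R, glt (eps R) c ∧ ∀ d ∈ ghost R, glt (eps R) d → gle c d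

/-- `R` is dense: `𝒢(R)` has no smallest element `> e`. -/
def DenseR : Prop := ¬ DiscreteR R

/-- `eR` is a semifield: `e ≠ 0`, `𝒢(R)` is closed under multiplication, and every
element of `𝒢(R)` is invertible in `eR` with respect to the identity `e`. -/
def GhostSemifield : Prop :=
  eps R ∈ ghost R ∧
    (∀ g ∈ ghost R, ∀ h ∈ ghost R, g * h ∈ ghost R) ∧
    (∀ g ∈ ghost R, ∃ h ∈ ghost R, g * h = eps R)

end SSF

section Quad

variable {R : Type*} [CommSemiring R] {V : Type*} [AddCommMonoid V] [Module R V]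

/-- `b` is a (symmetric bilinear) companion of the quadratic form `q`. -/
def IsCompanion (q : V → R) (b : V → V → R) : Prop :=
  (∀ x y, b x y = b y x) ∧
    (∀ x y z, b (x + y) z = b x z + b y z) ∧
    (∀ (a : R) (x y : V), b (a • x) y = a * b x y) ∧
    (∀ x y, q (x + y) = q x + q y + b x y)

/-- `(q, b)` is a quadratic pair on `V`. -/
def IsQuadPair (q : V → R) (b : V → V → R) : Prop :=
  (∀ (a : R) (x : V), q (a • x) = a ^ 2 * q x) ∧ IsCompanion q b

/-- `q` is a quadratic form on `V`. -/
def IsQuadForm (q : V → R) : Prop := ∃ b, IsQuadPair q b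

/-- `q` is quasilinear (i.e. additive) on the submodule `W`. -/
def QuasilinearOn (q : V → R) (W : Submodule R V) : Prop :=
  ∀ u ∈ W, ∀ v ∈ W, q (u + v) = q u + q v

/-- `x` is `q`-minimal: `q x' < q x` for every `x' < x` (in the minimal orderings). -/
def QMinimal (q : V → R) (x : V) : Prop := ∀ x' : V, mlt x' x → mlt (q x') (q x)

/-- The maximum of two elements of `R` with respect to the minimal ordering. -/
noncomputable def rsup (a b : R) : R := if a = b then a else a + b

/-- The componentwise maximum `x ∨ y` (in the minimal ordering) of two vectors
of a free module. -/
noncomputable def vsup {ι : Type*} (bV : Module.Basis ι R V) (x y : V) : V :=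
  bV.repr.symm (Finsupp.zipWith rsup (by simp [rsup]) (bV.repr x) (bV.repr y))

/-- The restriction `x(J)` of a vector to a subset `J` of the index set of the base. -/
noncomputable def restrict {ι : Type*} (bV : Module.Basis ι R V) (x : V) (J : Finset ι) : V :=
  ∑ i ∈ J, (bV.repr x) i • bV i

/-- The CS-ratio `CS(x,y) = e·b(x,y)² · (e·q(x)·q(y))⁻¹`, where `inv` is the
inversion of the semifield `eR`. -/
noncomputable def CSratio (q : V → R) (b : V → V → R) (inv : R → R) (x y : V) : R :=
  eps R * (b x y) ^ 2 * inv (eps R * (q x * q y))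

end Quad

/-!
Write `s = ac + bd` and `t = ad + bc`, so that the claim is `s + t = s`. The ghosts
`A = e·ac`, `B = e·bd` and `G = e·ad = e·t` satisfy `AB = G²`, hence `G ≤ A + B = e·s` in the
totally ordered semifield `eR`, and `A = B` if moreover `G = A + B`. If `e·s ≠ e·t`, then
`s + t` is `s` or `t`, and `t` is excluded because `e·t < e·s`. If `e·s = e·t`, then `A = B`
makes `s = e·bd` a ghost, and `s + t = e·t = e·s = s`.
-/

section Lemmas

variable {R : Type*} [CommSemiring R]

lemma eps_mul (x : R) : eps R * x = x + x := by
  unfold eps; ring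

lemma gle_trans {u v w : R} (huv : gle u v) (hvw : gle v w) : gle u w := by
  unfold gle at *
  rw [← hvw, ← add_assoc, huv]

lemma gle_antisymm {u v : R} (huv : gle u v) (hvu : gle v u) : u = v :=
  hvu.symm.trans ((add_comm v u).trans huv)

lemma gle.mul_left {u v : R} (h : gle u v) (w : R) : gle (w * u) (w * v) := by
  unfold gle at *
  rw [← mul_add, h]

lemma gle_zero_left (u : R) : gle 0 u := zero_add u

namespace IsSupertropical

lemma eps_mul_eps (hR : IsSupertropical R) : eps R * eps R = eps R := by
  rw [eps_mul, hR.1]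

lemma eps_mul_of_mem_eSet (hR : IsSupertropical R) {u : R} (hu : u ∈ eSet R) :
    eps R * u = u := by
  obtain ⟨x, rfl⟩ := hu
  rw [← mul_assoc, hR.eps_mul_eps]

lemma gle_refl_of_mem_eSet (hR : IsSupertropical R) {u : R} (hu : u ∈ eSet R) : gle u u := by
  rw [gle, ← eps_mul, hR.eps_mul_of_mem_eSet hu]

lemma gle_total_of_mem_eSet (hR : IsSupertropical R) {v : R} (hv : v ∈ eSet R) (u : R) :
    gle u v ∨ gle v u := by
  by_cases h : eps R * u = eps R * v
  · left
    rw [gle, hR.2.2 u v h, hR.eps_mul_of_mem_eSet hv]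
  · rcases hR.2.1 u v h with huv | huv
    · right
      rwa [gle, add_comm]
    · exact Or.inl huv

lemma mul_left_cancel_of_mem_ghost (hR : IsSupertropical R) (hsf : GhostSemifield R)
    {g u v : R} (hg : g ∈ ghost R) (hu : u ∈ eSet R) (hv : v ∈ eSet R) (h : g * u = g * v) :
    u = v := by
  obtain ⟨g', -, hg'⟩ := hsf.2.2 g hg
  calc u = eps R * u := (hR.eps_mul_of_mem_eSet hu).symm
    _ = g' * (g * u) := by rw [← hg']; ring
    _ = g' * (g * v) := by rw [h]
    _ = eps R * v := by rw [← hg']; ring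
    _ = v := hR.eps_mul_of_mem_eSet hv

lemma gle_add_of_mul_eq_mul_self (hR : IsSupertropical R) (hsf : GhostSemifield R)
    {α β γ : R} (hα : α ∈ eSet R) (hβ : β ∈ eSet R) (hγ : γ ∈ eSet R) (h : α * β = γ * γ) :
    gle γ (α + β) := by
  wlog hβα : gle β α generalizing α β
  · rw [add_comm]
    exact this hβ hα (by rwa [mul_comm]) ((hR.gle_total_of_mem_eSet hβ α).resolve_right hβα)
  have hsum : α + β = α := by rw [add_comm]; exact hβα
  rw [hsum]
  rcases hR.gle_total_of_mem_eSet hα γ with hγα | hαγ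
  · exact hγα
  by_cases hγ0 : γ = 0
  · rw [hγ0]; exact gle_zero_left α
  have hle : gle (γ * γ) (γ * α) := by
    rw [← h, mul_comm γ α]
    exact gle_trans (hβα.mul_left α) (hαγ.mul_left α)
  have hγα : γ = α := hR.mul_left_cancel_of_mem_ghost hsf ⟨hγ, hγ0⟩ hγ hα
    (gle_antisymm hle (hαγ.mul_left γ))
  rw [hγα]
  exact hR.gle_refl_of_mem_eSet hα

lemma eq_of_mul_eq_add_mul_self (hR : IsSupertropical R) (hsf : GhostSemifield R)
    {α β : R} (hα : α ∈ eSet R) (hβ : β ∈ eSet R) (h : α * β = (α + β) * (α + β)) :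
    α = β := by
  wlog hβα : gle β α generalizing α β
  · exact (this hβ hα (by rw [mul_comm, h, add_comm])
      ((hR.gle_total_of_mem_eSet hβ α).resolve_right hβα)).symm
  have hsum : α + β = α := by rw [add_comm]; exact hβα
  rw [hsum] at h
  by_cases hα0 : α = 0
  · rw [hα0, gle, add_zero] at hβα
    rw [hα0, hβα]
  · exact hR.mul_left_cancel_of_mem_ghost hsf ⟨hα, hα0⟩ hα hβ h.symm

end IsSupertropical

end Lemmas

/-- if `e·bc = e·ad` then `ac + bd = (a+b)(c+d)`. -/
theorem stmt6 {R : Type*} [CommSemiring R] (hR : IsSupertropical R)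
    (hsf : GhostSemifield R) (a b c d : R)
    (h : eps R * (b * c) = eps R * (a * d)) :
    a * c + b * d = (a + b) * (c + d) := by
  suffices habsorb : (a * c + b * d) + (a * d + b * c) = a * c + b * d by
    rw [← habsorb]; ring
  set s := a * c + b * d
  set t := a * d + b * c
  have het : eps R * t = eps R * (a * d) := by
    rw [mul_add, h, ← eps_mul, hR.eps_mul_of_mem_eSet ⟨a * d, rfl⟩]
  have hes : eps R * s = eps R * (a * c) + eps R * (b * d) := mul_add _ _ _
  have hprod : eps R * (a * c) * (eps R * (b * d)) = eps R * (a * d) * (eps R * (a * d)) := by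
    calc _ = eps R * (a * d) * (eps R * (b * c)) := by ring
      _ = _ := by rw [h]
  by_cases hst : eps R * s = eps R * t
  · have hAB := hR.eq_of_mul_eq_add_mul_self hsf ⟨a * c, rfl⟩ ⟨b * d, rfl⟩
      (by rw [← hes, hst, het]; exact hprod)
    have hs : s ∈ eSet R := ⟨b * d, (hR.2.2 _ _ hAB).symm⟩
    rw [hR.2.2 _ _ hst, ← hst, hR.eps_mul_of_mem_eSet hs]
  · refine (hR.2.1 _ _ hst).resolve_right fun hst' => hst (gle_antisymm ?_ ?_)
    · rw [gle, ← mul_add, hst']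
    · rw [het, hes]
      exact hR.gle_add_of_mul_eq_mul_self hsf ⟨_, rfl⟩ ⟨_, rfl⟩ ⟨_, rfl⟩ hprod

end Supertrop
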